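/- Let V be a finite-dimensional real vector space with dim V = n ≥ 1, let Q be an anisotropic quadratic form on V, let Δ be a real inner product space that is a module over CliffordAlgebra Q and is simple (its only CliffordAlgebra Q-submodules are 0 and Δ), and let ψ ∈ Δ be nonzero. If φ ∈ Δ satisfies ⟨φ, (ι(x₁)⋯ι(x_r)) • ψ⟩ = 0 for all x₁,…,x_r ∈ V and both r = n−1 and r = n, then φ = 0. -/

import Mathlib

/-!
Write `W = ι(V)`, so that `W ^ r` is the span of the products of `r` vectors. For `b` in `W ^ m`,
`ι x * b * ι x` stays in `W ^ m`, because `ι x` anticommutes with `ι y` up to the scalar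
`polar Q x y`. In a word of more than `dim V` basis vectors some vector occurs twice, so
`W ^ (r + 2) ≤ W ^ r` once `r + 1 ≥ dim V`; conversely a vector `x` with `Q x ≠ 0` gives
`W ^ r ≤ W ^ (r + 2)` through `ι x * ι x = Q x`. As the powers of `W` span the Clifford algebra,
it equals `W ^ (n - 1) ⊔ W ^ n`. Hence `φ` is orthogonal to the whole orbit `CliffordAlgebra Q • ψ`,
which is all of `Δ` by simplicity, and so `φ` is orthogonal to itself.
-/

namespace CliffordAlgebra

variable {R M : Type*} [CommRing R] [AddCommGroup M] [Module R M] {Q : QuadraticForm R M}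

theorem ι_mul_mul_ι_mem_range_ι_pow (x : M) {m : ℕ} {a : CliffordAlgebra Q}
    (ha : a ∈ LinearMap.range (ι Q) ^ m) : ι Q x * a * ι Q x ∈ LinearMap.range (ι Q) ^ m := by
  induction ha using Submodule.pow_induction_on_left' with
  | algebraMap r =>
    rw [← Algebra.commutes, mul_assoc, ι_sq_scalar, ← map_mul, pow_zero]
    exact Submodule.algebraMap_mem _
  | add a b i _ _ ha hb => rw [mul_add, add_mul]; exact add_mem ha hb
  | mem_mul y hy i a ha ih =>
    obtain ⟨y, rfl⟩ := hy
    have hswap : ι Q x * ι Q y = algebraMap R _ (QuadraticMap.polar Q x y) - ι Q y * ι Q x :=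
      eq_sub_of_add_eq (ι_mul_ι_add_swap x y)
    have hexpand : ι Q x * (ι Q y * a) * ι Q x =
        QuadraticMap.polar Q x y • (a * ι Q x) - ι Q y * (ι Q x * a * ι Q x) := by
      rw [← mul_assoc, hswap, sub_mul, sub_mul, Algebra.smul_def]
      simp only [mul_assoc]
    rw [hexpand]
    refine sub_mem (Submodule.smul_mem _ _ ?_) ?_
    · rw [pow_succ]; exact Submodule.mul_mem_mul ha (LinearMap.mem_range_self _ _)
    · rw [pow_succ']; exact Submodule.mul_mem_mul (LinearMap.mem_range_self _ _) ih

theorem list_prod_map_ι_mem_range_ι_pow (l : List M) :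
    (l.map (ι Q)).prod ∈ LinearMap.range (ι Q) ^ l.length := by
  induction l with
  | nil =>
    rw [List.map_nil, List.prod_nil, List.length_nil, pow_zero]
    exact Submodule.one_le.mp le_rfl
  | cons x l ih =>
    rw [List.map_cons, List.prod_cons, List.length_cons, pow_succ']
    exact Submodule.mul_mem_mul (LinearMap.mem_range_self _ _) ih

theorem list_prod_map_ι_mem_range_ι_pow_of_not_nodup {l : List M} (hl : ¬ l.Nodup) :
    (l.map (ι Q)).prod ∈ LinearMap.range (ι Q) ^ (l.length - 2) := by
  obtain ⟨x, hx⟩ : ∃ x, [x, x].Sublist l := by simpa [List.nodup_iff_sublist] using hl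
  obtain ⟨l₁, l₂, rfl, hx₁, hx₂⟩ := List.cons_sublist_iff.mp hx
  obtain ⟨A, B, rfl⟩ := List.append_of_mem hx₁
  obtain ⟨B', C, rfl⟩ := List.append_of_mem (List.singleton_sublist.mp hx₂)
  have hprod : ((A ++ x :: B ++ (B' ++ x :: C)).map (ι Q)).prod =
      (A.map (ι Q)).prod * (ι Q x * ((B ++ B').map (ι Q)).prod * ι Q x) *
        (C.map (ι Q)).prod := by
    simp only [List.map_append, List.map_cons, List.prod_append, List.prod_cons, mul_assoc]
  have hlen : (A ++ x :: B ++ (B' ++ x :: C)).length - 2 =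
      A.length + (B ++ B').length + C.length := by
    simp only [List.length_append, List.length_cons]; omega
  rw [hprod, hlen, pow_add, pow_add]
  exact Submodule.mul_mem_mul (Submodule.mul_mem_mul (list_prod_map_ι_mem_range_ι_pow A)
    (ι_mul_mul_ι_mem_range_ι_pow x (list_prod_map_ι_mem_range_ι_pow _)))
    (list_prod_map_ι_mem_range_ι_pow C)

theorem range_ι_pow_add_two_le {κ : Type*} [Fintype κ] (b : Module.Basis κ R M) {k : ℕ}
    (hk : Fintype.card κ ≤ k + 1) :
    LinearMap.range (ι Q) ^ (k + 2) ≤ LinearMap.range (ι Q) ^ k := by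
  have hspan : LinearMap.range (ι Q) = Submodule.span R (Set.range (ι Q ∘ b)) := by
    rw [LinearMap.range_eq_map, ← b.span_eq, Submodule.map_span, Set.range_comp]
  rw [hspan, Submodule.span_pow, Submodule.span_le, ← hspan]
  intro _ hmem
  obtain ⟨f, rfl⟩ := Set.mem_pow.mp hmem
  choose g hg using fun i => (f i).2
  have hword : (List.ofFn fun i => (f i : CliffordAlgebra Q)) =
      ((List.ofFn g).map b).map (ι Q) := by
    simp only [List.map_ofFn, ← hg, Function.comp_def]
  have hdup : ¬ ((List.ofFn g).map b).Nodup := fun h => by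
    have := (h.of_map b).length_le_card
    rw [List.length_ofFn] at this
    omega
  have := list_prod_map_ι_mem_range_ι_pow_of_not_nodup (Q := Q) hdup
  rwa [List.length_map, List.length_ofFn, Nat.add_sub_cancel, ← hword] at this

theorem range_ι_pow_le_pow_add_two {x : M} (hx : IsUnit (Q x)) (m : ℕ) :
    LinearMap.range (ι Q) ^ m ≤ LinearMap.range (ι Q) ^ (m + 2) := by
  intro a ha
  obtain ⟨u, hu⟩ := hx
  have hpad : a = (↑u⁻¹ : R) • (ι Q x * (ι Q x * a)) := by
    rw [← mul_assoc, ι_sq_scalar, ← Algebra.smul_def, smul_smul, ← hu, Units.inv_mul, one_smul]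
  rw [hpad, pow_succ', pow_succ']
  exact Submodule.smul_mem _ _ (Submodule.mul_mem_mul (LinearMap.mem_range_self _ _)
    (Submodule.mul_mem_mul (LinearMap.mem_range_self _ _) ha))

theorem range_ι_pow_le_sup {κ : Type*} [Fintype κ] (b : Module.Basis κ R M) {x : M}
    (hx : IsUnit (Q x)) {k : ℕ} (hk : Fintype.card κ ≤ k + 1) (m : ℕ) :
    LinearMap.range (ι Q) ^ m ≤ LinearMap.range (ι Q) ^ k ⊔ LinearMap.range (ι Q) ^ (k + 1) := by
  have up : ∀ i, LinearMap.range (ι Q) ^ m ≤ LinearMap.range (ι Q) ^ (m + 2 * i) := fun i =>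
    monotone_nat_of_le_succ (f := fun i => LinearMap.range (ι Q) ^ (m + 2 * i))
      (fun i => range_ι_pow_le_pow_add_two hx _) (Nat.zero_le i)
  have down : ∀ j, Fintype.card κ ≤ j + 1 → ∀ i,
      LinearMap.range (ι Q) ^ (j + 2 * i) ≤ LinearMap.range (ι Q) ^ j := fun j hj i =>
    antitone_nat_of_succ_le (f := fun i => LinearMap.range (ι Q) ^ (j + 2 * i))
      (fun i => range_ι_pow_add_two_le b (k := j + 2 * i) (by omega)) (Nat.zero_le i)
  obtain ⟨i, hi | hi⟩ := Nat.even_or_odd' (m + k)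
  · calc LinearMap.range (ι Q) ^ m ≤ LinearMap.range (ι Q) ^ (k + 2 * (i + 1)) :=
          (up (k + 1)).trans_eq (by congr 1; omega)
      _ ≤ _ := (down k hk _).trans le_sup_left
  · calc LinearMap.range (ι Q) ^ m ≤ LinearMap.range (ι Q) ^ (k + 1 + 2 * (i + 1)) :=
          (up (k + 1)).trans_eq (by congr 1; omega)
      _ ≤ _ := (down (k + 1) (by omega) _).trans le_sup_right

theorem range_ι_pow_sup_eq_top {κ : Type*} [Fintype κ] (b : Module.Basis κ R M) {x : M}
    (hx : IsUnit (Q x)) {k : ℕ} (hk : Fintype.card κ ≤ k + 1) :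
    LinearMap.range (ι Q) ^ k ⊔ LinearMap.range (ι Q) ^ (k + 1) = ⊤ :=
  top_unique <| iSup_ι_range_eq_top (Q := Q) ▸ iSup_le (range_ι_pow_le_sup b hx hk)

end CliffordAlgebra

open CliffordAlgebra RealInnerProductSpace

/-- Let `V` be a finite-dimensional real vector space of dimension `n ≥ 1` with
an anisotropic quadratic form `Q`, let `Δ` be a real inner product space that is a simple module
over the Clifford algebra of `Q`, and let `ψ ∈ Δ` be nonzero. If `φ ∈ Δ` is orthogonal to all
elements `(ι x₁ ⋯ ι x_r) • ψ` with `r ∈ {n - 1, n}`, then `φ = 0`. -/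
theorem orthogonal_to_top_degree_products_eq_zero
    (V : Type*) [AddCommGroup V] [Module ℝ V] [FiniteDimensional ℝ V]
    (n : ℕ) (hn : Module.finrank ℝ V = n) (hn1 : 1 ≤ n)
    (Q : QuadraticForm ℝ V) (hQ : ∀ x : V, Q x = 0 → x = 0)
    (Δ : Type*) [NormedAddCommGroup Δ] [InnerProductSpace ℝ Δ]
    [Module (CliffordAlgebra Q) Δ] [IsScalarTower ℝ (CliffordAlgebra Q) Δ]
    (hsimple : ∀ N : Submodule (CliffordAlgebra Q) Δ, N = ⊥ ∨ N = ⊤)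
    (ψ : Δ) (hψ : ψ ≠ 0)
    (φ : Δ)
    (hφ : ∀ r : ℕ, (r = n - 1 ∨ r = n) → ∀ x : Fin r → V,
      ⟪φ, (List.ofFn fun i => ι Q (x i)).prod • ψ⟫ = 0) :
    φ = 0 := by
  obtain ⟨k, rfl⟩ : ∃ k, n = k + 1 := ⟨n - 1, by omega⟩
  have : Nontrivial V := Module.finrank_pos_iff (R := ℝ) |>.mp (by omega)
  obtain ⟨x, hx⟩ := exists_ne (0 : V)
  have hspan := range_ι_pow_sup_eq_top (Module.finBasis ℝ V) (Ne.isUnit (mt (hQ x) hx))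
    (k := k) (by simp [hn])
  let orth : Submodule ℝ (CliffordAlgebra Q) := LinearMap.ker <| (innerₛₗ ℝ φ).comp
    ((LinearMap.toSpanSingleton (CliffordAlgebra Q) Δ ψ).restrictScalars ℝ)
  have horth : ∀ r, (r = k ∨ r = k + 1) → LinearMap.range (ι Q) ^ r ≤ orth := by
    intro r hr
    rw [Submodule.pow_eq_span_pow_set, Submodule.span_le]
    intro _ hmem
    obtain ⟨f, rfl⟩ := Set.mem_pow.mp hmem
    choose y hy using fun i => (f i).2
    simpa [orth, ← hy] using hφ r (by omega) y
  have horth_all (c : CliffordAlgebra Q) : ⟪φ, c • ψ⟫ = 0 := by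
    simpa [orth] using (sup_le (horth k (by simp)) (horth (k + 1) (by simp)))
      (hspan ▸ Submodule.mem_top (x := c))
  have hcyclic : Submodule.span (CliffordAlgebra Q) {ψ} = ⊤ :=
    (hsimple _).resolve_left (mt Submodule.span_singleton_eq_bot.mp hψ)
  obtain ⟨c, rfl⟩ := Submodule.mem_span_singleton.mp (hcyclic ▸ Submodule.mem_top (x := φ))
  exact inner_self_eq_zero.mp (horth_all c)
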